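/- arXiv:2012.07840 — 2 statements merged into one kernel-verified Lean document; each statement's English description precedes it below -/
import Mathlib

section
/- Let n ≥ 1 and let t_0, t_1, …, t_n be integers with 1 = t_0 < t_1 < ⋯ < t_n. Define Δ = max_{1 ≤ s ≤ n} (t_s − t_0)/s (as a rational/real number). Then for all real numbers a_0 ≥ a_1 ≥ ⋯ ≥ a_{n−1} ≥ 1 one has a_0^{t_1−t_0} · a_1^{t_2−t_1} ⋯ a_{n−1}^{t_n−t_{n−1}} ≤ (a_0 a_1 ⋯ a_{n−1})^Δ. -/
/-!
Taking logarithms turns the claim into `∑ cᵢ xᵢ ≤ Δ ∑ xᵢ` with `cᵢ = t (i+1) - t i` and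
`xᵢ = log aᵢ` nonnegative and nonincreasing. By summation by parts both sides are nonnegative
combinations of the differences `xᵢ - xᵢ₊₁` (and of `x (n-1)`), with coefficients the partial sums
`∑_{i<s} cᵢ = t s - t 0` on the left and `s Δ` on the right; the definition of `Δ` is exactly
`t s - t 0 ≤ s Δ`.
-/

open Finset

theorem sum_mul_le_mul_sum_of_antitoneOn {α : Type*} [CommRing α] [PartialOrder α]
    [IsOrderedRing α] {n : ℕ} {c x : ℕ → α} {Δ : α} (hx : AntitoneOn x (Set.Iio n))
    (hx₀ : ∀ i < n, 0 ≤ x i) (hc : ∀ s ∈ Icc 1 n, ∑ i ∈ range s, c i ≤ s * Δ) :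
    ∑ i ∈ range n, c i * x i ≤ Δ * ∑ i ∈ range n, x i := by
  obtain _ | m := n
  · simp
  have hparts := sum_range_by_parts x c (m + 1)
  have hconst := sum_range_by_parts x (fun _ ↦ Δ) (m + 1)
  rw [sub_eq_add_neg, ← sum_neg_distrib] at hparts hconst
  simp only [smul_eq_mul, sum_const, card_range, nsmul_eq_mul, add_tsub_cancel_right, ← neg_mul,
    neg_sub] at hparts hconst
  rw [mul_sum, sum_congr rfl fun i _ ↦ mul_comm Δ (x i),
    sum_congr rfl fun i _ ↦ mul_comm (c i) (x i), hparts, hconst]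
  gcongr with i hi
  · exact hx₀ m (by omega)
  · exact_mod_cast hc (m + 1) (by simp)
  · rw [mem_range] at hi
    exact sub_nonneg.2 <| hx (Set.mem_Iio.2 (by omega)) (Set.mem_Iio.2 (by omega)) (Nat.le_succ i)
  · rw [mem_range] at hi
    exact_mod_cast hc (i + 1) (mem_Icc.2 ⟨by omega, by omega⟩)

theorem prod_rpow_le_rpow_prod_of_antitoneOn {n : ℕ} {a c : ℕ → ℝ} {Δ : ℝ}
    (ha : AntitoneOn a (Set.Iio n)) (ha₁ : ∀ i < n, 1 ≤ a i)
    (hc : ∀ s ∈ Icc 1 n, ∑ i ∈ range s, c i ≤ s * Δ) :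
    ∏ i ∈ range n, a i ^ c i ≤ (∏ i ∈ range n, a i) ^ Δ := by
  have ha₀ : ∀ i ∈ range n, 0 < a i := fun i hi ↦ one_pos.trans_le (ha₁ i (mem_range.1 hi))
  have hprod : 0 < ∏ i ∈ range n, a i := prod_pos ha₀
  rw [← Real.log_le_log_iff (prod_pos fun i hi ↦ Real.rpow_pos_of_pos (ha₀ i hi) _)
      (Real.rpow_pos_of_pos hprod Δ), Real.log_rpow hprod,
    Real.log_prod fun i hi ↦ (Real.rpow_pos_of_pos (ha₀ i hi) _).ne',
    Real.log_prod fun i hi ↦ (ha₀ i hi).ne', sum_congr rfl fun i hi ↦ Real.log_rpow (ha₀ i hi) _]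
  refine sum_mul_le_mul_sum_of_antitoneOn (fun i hi j hj hij ↦ ?_)
    (fun i hi ↦ Real.log_nonneg (ha₁ i hi)) hc
  exact Real.log_le_log (ha₀ j (mem_range.2 hj)) (ha hi hj hij)

theorem stmt_0_general (n : ℕ) (hn : 1 ≤ n) (t : ℕ → ℤ) (Δ : ℝ)
    (hΔ : Δ = (Finset.Icc 1 n).sup' (Finset.nonempty_Icc.mpr hn)
      (fun s => ((t s - t 0 : ℤ) : ℝ) / (s : ℝ)))
    (a : ℕ → ℝ) (ha : ∀ i, i < n → 1 ≤ a i)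
    (hamono : ∀ i, i + 1 < n → a (i + 1) ≤ a i) :
    ∏ i ∈ Finset.range n, (a i) ^ ((t (i + 1) - t i : ℤ) : ℝ) ≤
      (∏ i ∈ Finset.range n, a i) ^ Δ := by
  refine prod_rpow_le_rpow_prod_of_antitoneOn
    (antitoneOn_of_add_one_le Set.ordConnected_Iio fun i _ _ hi ↦ hamono i hi) ha
    fun s hs ↦ ?_
  have hs₀ : (0 : ℝ) < s := by exact_mod_cast (mem_Icc.1 hs).1
  rw [← div_le_iff₀' hs₀]
  push_cast
  rw [sum_range_sub (fun i ↦ (t i : ℝ)), hΔ]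
  exact_mod_cast le_sup' (fun s : ℕ ↦ ((t s - t 0 : ℤ) : ℝ) / s) hs

/-- Exponent-rearrangement lemma (Lemma 3.1 of the paper): for strictly increasing
integers `1 = t 0 < t 1 < ⋯ < t n` and `Δ = max_{1 ≤ s ≤ n} (t s - t 0)/s`, and
reals `a 0 ≥ a 1 ≥ ⋯ ≥ a (n-1) ≥ 1`, one has
`∏ i, (a i) ^ (t (i+1) - t i) ≤ (∏ i, a i) ^ Δ`. -/
theorem stmt_0 (n : ℕ) (hn : 1 ≤ n) (t : ℕ → ℤ) (ht0 : t 0 = 1)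
    (htmono : ∀ i, i < n → t i < t (i + 1)) (Δ : ℝ)
    (hΔ : Δ = (Finset.Icc 1 n).sup' (Finset.nonempty_Icc.mpr hn)
      (fun s => ((t s - t 0 : ℤ) : ℝ) / (s : ℝ)))
    (a : ℕ → ℝ) (ha : ∀ i, i < n → 1 ≤ a i)
    (hamono : ∀ i, i + 1 < n → a (i + 1) ≤ a i) :
    ∏ i ∈ Finset.range n, (a i) ^ ((t (i + 1) - t i : ℤ) : ℝ) ≤
      (∏ i ∈ Finset.range n, a i) ^ Δ :=
  stmt_0_general n hn t Δ hΔ a ha hamono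
end

section
/- Let q ≥ 1 and p ≥ 0 be integers, let 0 < ε < 1, and let s_k = binom(k + q − 1, q − 1) for k ∈ ℕ. If p is the smallest nonnegative integer such that s_{p+1}/s_p ≤ 1 + ε, then s_{p+1} ≤ (1+ε)^{⌊q / (log(1+ε))^2⌋ + 1}, where log is the natural logarithm. -/
/-- Key analytic fact: `(1+ε) * log (1+ε) ≤ 2 * log 2 * ε` for `ε ∈ [0,1]`,
by convexity of `x * log x`. -/
lemma key_mul_log (ε : ℝ) (h0 : 0 ≤ ε) (h1 : ε ≤ 1) :
    (1 + ε) * Real.log (1 + ε) ≤ 2 * Real.log 2 * ε := by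
  have hc := Real.convexOn_mul_log.2 (Set.mem_Ici.2 (by norm_num : (0:ℝ) ≤ 1))
    (Set.mem_Ici.2 (by norm_num : (0:ℝ) ≤ 2)) (by linarith : (0:ℝ) ≤ 1 - ε) h0
    (by ring : (1 - ε) + ε = 1)
  simp only [smul_eq_mul] at hc
  have he : (1 - ε) * 1 + ε * 2 = 1 + ε := by ring
  rw [he, Real.log_one] at hc
  nlinarith [hc]

/-- Inequality (4.1): with `s k = (k + q - 1).choose (q - 1)`, if `p` is the smallest
nonnegative integer with `s (p+1) / s p ≤ 1 + ε`, then
`s (p+1) ≤ (1+ε) ^ (⌊q / (log (1+ε))^2⌋ + 1)`. -/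
theorem stmt_11 (q : ℕ) (hq : 1 ≤ q) (ε : ℝ) (hε0 : 0 < ε) (hε1 : ε < 1)
    (s : ℕ → ℕ) (hs : ∀ k, s k = (k + q - 1).choose (q - 1)) (p : ℕ)
    (hp : (s (p + 1) : ℝ) / (s p : ℝ) ≤ 1 + ε)
    (hpmin : ∀ k, k < p → ¬ ((s (k + 1) : ℝ) / (s k : ℝ) ≤ 1 + ε)) :
    (s (p + 1) : ℝ) ≤ (1 + ε) ^ (⌊(q : ℝ) / (Real.log (1 + ε)) ^ 2⌋₊ + 1) := by
  have h1ε : (1:ℝ) < 1 + ε := by linarith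
  -- trivial case q = 1
  rcases eq_or_lt_of_le hq with hq1 | hq2
  · have hs1 : s (p + 1) = 1 := by rw [hs]; simp [← hq1]
    rw [hs1]
    exact_mod_cast one_le_pow₀ h1ε.le
  -- now q ≥ 2
  have spos : ∀ k, 0 < s k := by
    intro k; rw [hs]; exact Nat.choose_pos (by omega)
  have sposR : ∀ k, (0:ℝ) < (s k : ℝ) := fun k => by exact_mod_cast spos k
  -- the key identity (k + q) * s k = s (k+1) * (k+1)
  have key_id : ∀ k : ℕ, (k + q) * s k = s (k + 1) * (k + 1) := by
    intro k
    have h1 : s k = (k + q - 1).choose k := by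
      rw [hs, ← Nat.choose_symm (by omega : q - 1 ≤ k + q - 1)]
      congr 1; omega
    have h2 : s (k + 1) = (k + q).choose (k + 1) := by
      rw [hs, ← Nat.choose_symm (by omega : q - 1 ≤ k + 1 + q - 1)]
      congr 1 <;> omega
    have h3 := Nat.add_one_mul_choose_eq (k + q - 1) k
    have e1 : k + q - 1 + 1 = k + q := by omega
    rw [e1] at h3
    rw [h1, h2, h3]
  have key_idR : ∀ k : ℕ, ((k:ℝ) + q) * (s k : ℝ) = (s (k + 1) : ℝ) * ((k:ℝ) + 1) := by
    intro k; exact_mod_cast key_id k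
  -- from hp : (p + q) ≤ (1+ε) * (p+1)
  have hA : ((p:ℝ) + q) ≤ (1 + ε) * ((p:ℝ) + 1) := by
    have h1 : (s (p + 1) : ℝ) ≤ (1 + ε) * (s p : ℝ) := (div_le_iff₀ (sposR p)).mp hp
    have h2 := key_idR p
    nlinarith [sposR p, sposR (p + 1)]
  -- p ≥ 1, i.e. p = m + 1
  obtain _ | m := p
  · exfalso
    have : (q : ℝ) ≤ 1 + ε := by push_cast at hA ⊢; linarith
    have : (q : ℝ) < 2 := by linarith
    have : q < 2 := by exact_mod_cast this
    omega
  set p := m + 1 with hpdef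
  -- minimality at k = m gives ε * p < q - 1
  have hB : ε * (p : ℝ) < (q:ℝ) - 1 := by
    have hmin := hpmin m (by omega)
    have h1 : (1 + ε) * (s m : ℝ) < (s (m + 1) : ℝ) := by
      by_contra hcon
      push_neg at hcon
      exact hmin ((div_le_iff₀ (sposR m)).mpr hcon)
    have h2 := key_idR m
    have : (1 + ε) * ((m:ℝ) + 1) < (m:ℝ) + q := by nlinarith [sposR m, sposR (m + 1)]
    push_cast
    push_cast at this
    have hpR : (p:ℝ) = (m:ℝ) + 1 := by simp [hpdef]
    rw [hpR]
    nlinarith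
  -- binomial bound : s (p+1) ≤ 2 ^ (p + q)
  have hC : (s (p + 1) : ℝ) ≤ (2:ℝ) ^ (p + q) := by
    have h1 : s (p + 1) ≤ 2 ^ (p + q) := by
      rw [hs]
      have e1 : p + 1 + q - 1 = p + q := by omega
      rw [e1]
      calc (p + q).choose (q - 1)
          ≤ ∑ i ∈ Finset.range (p + q + 1), (p + q).choose i :=
            Finset.single_le_sum (fun i _ => Nat.zero_le _)
              (Finset.mem_range.2 (by omega))
        _ = 2 ^ (p + q) := Nat.sum_range_choose (p + q)
    exact_mod_cast h1
  -- set L = log (1 + ε)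
  set L := Real.log (1 + ε) with hLdef
  have hL0 : 0 < L := Real.log_pos h1ε
  set N := ⌊(q : ℝ) / L ^ 2⌋₊ with hNdef
  -- main numeric inequality : (p + q) * log 2 ≤ (N + 1) * L
  have hnum : ((p:ℝ) + q) * Real.log 2 ≤ ((N:ℝ) + 1) * L := by
    have hfloor : (q : ℝ) / L ^ 2 < (N:ℝ) + 1 := Nat.lt_floor_add_one _
    have hqL : (q : ℝ) / L < ((N:ℝ) + 1) * L := by
      have := mul_lt_mul_of_pos_right hfloor hL0
      calc (q:ℝ) / L = (q:ℝ) / L ^ 2 * L := by field_simp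
        _ < ((N:ℝ) + 1) * L := this
    have hkey := key_mul_log ε hε0.le hε1.le
    have hlog2 : Real.log 2 < 0.6931471808 := Real.log_two_lt_d9
    have hlog2' : (0:ℝ) < Real.log 2 := Real.log_pos (by norm_num)
    have hq1 : (1:ℝ) ≤ (q:ℝ) := by exact_mod_cast hq
    -- show (p + q) * log 2 ≤ q / L, i.e. (p+q) * log2 * L ≤ q
    have hmain : ((p:ℝ) + q) * Real.log 2 * L ≤ (q:ℝ) := by
      have c1 : Real.log 2 * L * (ε * (p:ℝ)) ≤ Real.log 2 * L * ((q:ℝ) - 1) :=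
        mul_le_mul_of_nonneg_left hB.le (by positivity)
      have c2 : Real.log 2 * (q:ℝ) * ((1 + ε) * L) ≤ Real.log 2 * (q:ℝ) * (2 * Real.log 2 * ε) :=
        mul_le_mul_of_nonneg_left hkey (by positivity)
      have c3 : 2 * Real.log 2 * Real.log 2 < 1 := by nlinarith
      have c4 : 2 * Real.log 2 * Real.log 2 * (ε * (q:ℝ)) ≤ 1 * (ε * (q:ℝ)) := by
        apply mul_le_mul_of_nonneg_right c3.le (by positivity)
      have hLε : Real.log 2 * L ≤ 2 * Real.log 2 * Real.log 2 * ε := by nlinarith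
      -- combine : ((p+q) * log2 * L) * ε ≤ q * ε
      have comb : ((p:ℝ) + q) * Real.log 2 * L * ε ≤ (q:ℝ) * ε := by nlinarith
      exact le_of_mul_le_mul_right comb hε0
    calc ((p:ℝ) + q) * Real.log 2 ≤ (q:ℝ) / L := by
          rw [le_div_iff₀ hL0]; exact hmain
      _ ≤ ((N:ℝ) + 1) * L := hqL.le
  -- conclude via exp/log
  calc (s (p + 1) : ℝ) ≤ (2:ℝ) ^ (p + q) := hC
    _ ≤ (1 + ε) ^ (N + 1) := by
        rw [← Real.rpow_natCast 2 (p + q), ← Real.rpow_natCast (1 + ε) (N + 1),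
          Real.rpow_def_of_pos (by norm_num : (0:ℝ) < 2),
          Real.rpow_def_of_pos (by linarith : (0:ℝ) < 1 + ε)]
        apply Real.exp_le_exp.mpr
        push_cast at hnum ⊢
        nlinarith [hnum]
end
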